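/- Let L = (S, step) be a labelled transition system over Σ and let A ⊆ Σ. Define the hiding LTS L' = (S, step') by: step' P none Q holds iff step P none Q holds or step P (some a) Q holds for some a ∈ A; and step' P (some a) Q holds iff step P (some a) Q holds and a ∉ A. Then for every state P, the availability traces of P in L' equal hide_A applied to the availability traces of P in L: availTraces_{L'}(P) = hide_A(availTraces_L(P)). -/

import Mathlib

/-- An availability action over the alphabet `E`: `Sum.inl a` is an ordinary event `a ∈ Σ`,
and `Sum.inr a` is the offer `◎a` of the event `a ∈ Σ`. -/
abbrev Act (E : Type*) := E ⊕ E

variable {E : Type*}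

/-- `HasTrace step P tr` holds if `tr` is an availability trace of the state `P` of the LTS
with transition relation `step`: `tr` is the sequence of non-τ labels of some finite sequence
of consecutive derived transitions starting at `P`, where the derived transitions are the
ordinary transitions (labelled by `none` for τ, or `some a` for an event `a`), together with
self-loops `P ⟶◎a P` whenever `P` has an `a`-transition. -/
inductive HasTrace {S : Type*} (step : S → Option E → S → Prop) : S → List (Act E) → Prop
  | nil (P : S) : HasTrace step P []
  | tau {P Q : S} {tr} : step P none Q → HasTrace step Q tr → HasTrace step P tr
  | ev {P Q : S} {a : E} {tr} : step P (some a) Q → HasTrace step Q tr →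
      HasTrace step P (Sum.inl a :: tr)
  | offer {P : S} {a : E} {tr} : (∃ Q, step P (some a) Q) → HasTrace step P tr →
      HasTrace step P (Sum.inr a :: tr)

/-- The set of availability traces of a state `P`. -/
def availTraces {S : Type*} (step : S → Option E → S → Prop) (P : S) : Set (List (Act E)) :=
  {tr | HasTrace step P tr}

open Classical in
/-- `hideTr A tr` is `tr \ A`: the trace `tr` with all ordinary events belonging to `A`
removed. -/
noncomputable def hideTr (A : Set E) : List (Act E) → List (Act E)
  | [] => []
  | Sum.inl a :: tr => if a ∈ A then hideTr A tr else Sum.inl a :: hideTr A tr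
  | Sum.inr a :: tr => Sum.inr a :: hideTr A tr

/-- The semantics of hiding: offers of hidden events are blocked and hidden events are
removed from the trace. -/
noncomputable def hideOp (A : Set E) (T : Set (List (Act E))) : Set (List (Act E)) :=
  {u | ∃ tr ∈ T, (∀ a ∈ A, (Sum.inr a : Act E) ∉ tr) ∧ u = hideTr A tr}

/-!
A run of the hiding LTS is a run of the original one in which the τ-steps that came from
hidden events are recorded again as those events: hiding that trace gives back the observed
one, and it contains no offer of a hidden event because the hiding LTS has no transitions
labelled by hidden events. Conversely, in a run of the original LTS without offers of hidden
events every transition on a hidden event becomes a τ-step and all other transitions and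
offers survive.
-/

section Hiding

variable {S : Type*}

def hideStep (A : Set E) (step : S → Option E → S → Prop) : S → Option E → S → Prop
  | P, none, Q => step P none Q ∨ ∃ a ∈ A, step P (some a) Q
  | P, some a, Q => step P (some a) Q ∧ a ∉ A

section hideTr

variable (A : Set E) (tr : List (Act E))

@[simp]
theorem hideTr_inl_cons_of_mem {a : E} (ha : a ∈ A) :
    hideTr A (Sum.inl a :: tr) = hideTr A tr := by
  simp [hideTr, ha]

@[simp]
theorem hideTr_inl_cons_of_notMem {a : E} (ha : a ∉ A) :
    hideTr A (Sum.inl a :: tr) = Sum.inl a :: hideTr A tr := by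
  simp [hideTr, ha]

@[simp]
theorem hideTr_inr_cons (a : E) : hideTr A (Sum.inr a :: tr) = Sum.inr a :: hideTr A tr := by
  simp [hideTr]

end hideTr

theorem HasTrace.hide {step : S → Option E → S → Prop} {A : Set E} {P : S}
    {tr : List (Act E)} (htr : HasTrace step P tr) (hno : ∀ a ∈ A, (Sum.inr a : Act E) ∉ tr) :
    HasTrace (hideStep A step) P (hideTr A tr) := by
  induction htr with
  | nil P => exact .nil P
  | tau hst _ ih => exact .tau (Or.inl hst) (ih hno)
  | @ev P Q a tr hst _ ih =>
    have hno' : ∀ b ∈ A, (Sum.inr b : Act E) ∉ tr := by simpa using hno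
    by_cases ha : a ∈ A
    · rw [hideTr_inl_cons_of_mem A tr ha]
      exact .tau (Or.inr ⟨a, ha, hst⟩) (ih hno')
    · rw [hideTr_inl_cons_of_notMem A tr ha]
      exact .ev ⟨hst, ha⟩ (ih hno')
  | @offer P a tr hst _ ih =>
    obtain ⟨Q, hQ⟩ := hst
    have ha : a ∉ A := fun ha => hno a ha List.mem_cons_self
    have hno' : ∀ b ∈ A, (Sum.inr b : Act E) ∉ tr := fun b hb h => hno b hb (.tail _ h)
    rw [hideTr_inr_cons]
    exact .offer ⟨Q, hQ, ha⟩ (ih hno')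

theorem HasTrace.exists_of_hideStep {step : S → Option E → S → Prop} {A : Set E} {P : S}
    {u : List (Act E)} (hu : HasTrace (hideStep A step) P u) :
    ∃ tr, HasTrace step P tr ∧ (∀ a ∈ A, (Sum.inr a : Act E) ∉ tr) ∧ u = hideTr A tr := by
  induction hu with
  | nil P => exact ⟨[], .nil P, by simp, rfl⟩
  | tau hst _ ih =>
    obtain ⟨tr, htr, hno, rfl⟩ := ih
    rcases hst with hst | ⟨a, ha, hst⟩
    · exact ⟨tr, .tau hst htr, hno, rfl⟩
    · exact ⟨Sum.inl a :: tr, .ev hst htr, by simpa using hno,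
        (hideTr_inl_cons_of_mem A tr ha).symm⟩
  | ev hst _ ih =>
    obtain ⟨hst, ha⟩ := hst
    obtain ⟨tr, htr, hno, rfl⟩ := ih
    exact ⟨Sum.inl _ :: tr, .ev hst htr, by simpa using hno,
      (hideTr_inl_cons_of_notMem A tr ha).symm⟩
  | @offer P a _ hst _ ih =>
    obtain ⟨Q, hQ, ha⟩ := hst
    obtain ⟨tr, htr, hno, rfl⟩ := ih
    refine ⟨Sum.inr a :: tr, .offer ⟨Q, hQ⟩ htr, ?_, (hideTr_inr_cons A tr a).symm⟩
    rintro b hb (_ | ⟨_, h⟩)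
    · exact ha hb
    · exact hno b hb h

theorem availTraces_hideStep (step : S → Option E → S → Prop) (A : Set E) (P : S) :
    availTraces (hideStep A step) P = hideOp A (availTraces step P) := by
  ext u
  constructor
  · exact HasTrace.exists_of_hideStep
  · rintro ⟨tr, htr, hno, rfl⟩
    exact htr.hide hno

end Hiding

/-- Congruence of the hiding operator: if `step'` is the operational hiding of `A` in
`step` (events in `A` become τ, and are removed from the visible transitions), then the
availability traces of `P` under `step'` are exactly `hideOp A` of its availability traces
under `step`. -/
theorem hide_congruent {E S : Type*} (step step' : S → Option E → S → Prop) (A : Set E)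
    (h_tau : ∀ P Q : S, step' P none Q ↔ (step P none Q ∨ ∃ a ∈ A, step P (some a) Q))
    (h_ev : ∀ (P Q : S) (a : E), step' P (some a) Q ↔ (step P (some a) Q ∧ a ∉ A))
    (P : S) :
    availTraces step' P = hideOp A (availTraces step P) := by
  have h_step' : step' = hideStep A step := by
    funext P α Q
    cases α with
    | none => exact propext (h_tau P Q)
    | some a => exact propext (h_ev P Q a)
  rw [h_step', availTraces_hideStep]
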